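/- Let H be a Hopf algebra, δ: H → k a character (algebra homomorphism to the ground field), and σ ∈ H a group-like element. Make k a right H-module via x·h = x δ(h) and a left H-comodule via x ↦ σ ⊗ x. Then k is a right-left anti-Yetter-Drinfeld module (i.e., Δ(x·h) = S(h⁽³⁾)σh⁽¹⁾ ⊗ x·h⁽²⁾ for all h) if and only if the twisted antipode S_δ defined by S_δ(h) = δ(h⁽¹⁾)S(h⁽²⁾) satisfies S_δ(S_δ(h)) = σhσ⁻¹ for all h ∈ H. -/

import Mathlib

open TensorProduct LinearMap Coalgebra

noncomputable section

variable (k : Type) [Field k] (H : Type) [Ring H] [HopfAlgebra k H]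

/-- The twisted antipode `S_δ(h) = δ(h⁽¹⁾)S(h⁽²⁾)`. -/
def twistedAntipode (δ : H →ₐ[k] k) : H →ₗ[k] H :=
  (TensorProduct.lid k H).toLinearMap
    ∘ₗ map δ.toLinearMap (HopfAlgebra.antipode (R := k)) ∘ₗ comul

/-- The right-hand side `S(h⁽³⁾)σh⁽¹⁾ · δ(h⁽²⁾)` of the right-left
anti-Yetter-Drinfeld condition for the one-dimensional module `ᵟk_σ`,
under the identification `H ⊗ k ≅ k ⊗ H ≅ H`. -/
def aydRHSchar (δ : H →ₐ[k] k) (σ : H) : H →ₗ[k] H :=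
  mul' k H ∘ₗ map (mulRight k σ) LinearMap.id
    ∘ₗ (TensorProduct.comm k H H).toLinearMap
    ∘ₗ map LinearMap.id
        ((TensorProduct.lid k H).toLinearMap
          ∘ₗ map δ.toLinearMap (HopfAlgebra.antipode (R := k)))
    ∘ₗ map LinearMap.id comul ∘ₗ comul


/-! Convolution into `Hᵐᵒᵖ`, `(f * g) h = g(h₂) f(h₁)`, turns the anti-Yetter-Drinfeld condition
into the linear equation `op * T = D` with `T h = S_δ(h) σ` and `D h = δ(h) σ`. As `op` has the
convolution inverse `op ∘ S⁻¹`, the condition becomes `S_δ(h) σ = σ S⁻¹(h₁ δ(h₂))`. Because `S` is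
an anti-coalgebra map, `h ↦ S⁻¹(h₁ δ(h₂))` is a left inverse of the surjection `S_δ = S(δ(h₁) h₂)`:
both facts come down to `δ ∘ S` being the convolution inverse of `δ`. Substituting `h = S_δ x`
then turns the condition into `S_δ(S_δ x) σ = σ x`. -/

section Hit

open WithConv

variable {R C : Type*} [CommSemiring R] [AddCommMonoid C] [Module R C] [Coalgebra R C]

/-- `φ ⇀ c = c₁ φ(c₂)` -/
def leftHit (φ : C →ₗ[R] R) : C →ₗ[R] C :=
  TensorProduct.rid R C ∘ₗ φ.lTensor C ∘ₗ comul

/-- `c ↼ φ = φ(c₁) c₂` -/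
def rightHit (φ : C →ₗ[R] R) : C →ₗ[R] C :=
  TensorProduct.lid R C ∘ₗ φ.rTensor C ∘ₗ comul

lemma Coalgebra.Repr.rightHit_apply {ι : Type*} {c : C} (r : Repr R c ι) (φ : C →ₗ[R] R) :
    rightHit φ c = ∑ i ∈ r.index, φ (r.left i) • r.right i := by
  simp [rightHit, ← r.eq]

lemma rightHit_counit : rightHit (counit : C →ₗ[R] R) = .id := by
  ext c
  simp [rightHit]

lemma rightHit_comp_rightHit (φ ψ : C →ₗ[R] R) :
    rightHit φ ∘ₗ rightHit ψ = rightHit (toConv ψ * toConv φ).ofConv := by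
  ext c
  let r := ℛ R c
  let Θ : C ⊗[R] (C ⊗[R] C) →ₗ[R] C :=
    TensorProduct.lid R C ∘ₗ (mul' R R ∘ₗ map ψ φ).rTensor C ∘ₗ
      (TensorProduct.assoc R C C C).symm.toLinearMap
  have hΘ (x y z : C) : Θ (x ⊗ₜ (y ⊗ₜ z)) = (ψ x * φ y) • z := by simp [Θ]
  have coassoc :=
    congr(Θ $(sum_tmul_tmul_eq r (fun i ↦ ℛ R (r.left i)) (fun i ↦ ℛ R (r.right i))))
  simp only [map_sum, hΘ] at coassoc
  rw [LinearMap.comp_apply, r.rightHit_apply, map_sum, r.rightHit_apply]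
  simp only [map_smul]
  simp only [(ℛ R _).rightHit_apply, (ℛ R _).convMul_apply, Finset.smul_sum, Finset.sum_smul,
    smul_smul]
  exact coassoc.symm

lemma rightHit_comp_rightHit_of_mul_eq_one {φ ψ : C →ₗ[R] R} (h : toConv ψ * toConv φ = 1) :
    rightHit φ ∘ₗ rightHit ψ = .id := by
  rw [rightHit_comp_rightHit, h, LinearMap.convOne_def, ofConv_toConv, Algebra.linearMap_self,
    LinearMap.id_comp, rightHit_counit]

end Hit

namespace HopfAlgebra

open WithConv MulOpposite Algebra.TensorProduct

variable {R A : Type*} [CommSemiring R] [Semiring A] [HopfAlgebra R A]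

section AlgHom

variable {B : Type*} [Semiring B] [Algebra R B]

lemma algHom_comp_mul_algHom_comp_eq_one {C : Type*} [AddCommMonoid C] [Module R C]
    [Coalgebra R C] (f : A →ₐ[R] B) {g h : C →ₗ[R] A} (hgh : toConv g * toConv h = 1) :
    toConv (f.toLinearMap ∘ₗ g) * toConv (f.toLinearMap ∘ₗ h) = 1 := by
  rw [← toConv_ofConv (_ * _), ← LinearMap.algHom_comp_convMul_distrib, toConv_ofConv, hgh]
  ext
  simp

lemma algHom_mul_algHom_comp_antipode (f : A →ₐ[R] B) :
    toConv f.toLinearMap * toConv (f.toLinearMap ∘ₗ antipode R) = 1 := by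
  simpa using algHom_comp_mul_algHom_comp_eq_one f LinearMap.id_mul_antipode

lemma algHom_comp_antipode_mul_algHom (f : A →ₐ[R] B) :
    toConv (f.toLinearMap ∘ₗ antipode R) * toConv f.toLinearMap = 1 := by
  simpa using algHom_comp_mul_algHom_comp_eq_one f LinearMap.antipode_mul_id

end AlgHom

lemma includeLeft_mul_includeRight :
    toConv (includeLeft : A →ₐ[R] A ⊗[R] A).toLinearMap *
      toConv (includeRight : A →ₐ[R] A ⊗[R] A).toLinearMap =
      toConv (comul (R := R) (A := A)) := by
  ext a
  simp [(ℛ R a).convMul_apply, ← (ℛ R a).eq]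

lemma includeRight_comp_antipode_mul_includeLeft_comp_antipode :
    toConv ((includeRight : A →ₐ[R] A ⊗[R] A).toLinearMap ∘ₗ antipode R) *
      toConv ((includeLeft : A →ₐ[R] A ⊗[R] A).toLinearMap ∘ₗ antipode R) =
      toConv (map (antipode R) (antipode R) ∘ₗ
        (TensorProduct.comm R A A).toLinearMap ∘ₗ comul) := by
  ext a
  simp [(ℛ R a).convMul_apply, ← (ℛ R a).eq]

-- Both sides are convolution inverses of `comul = includeLeft * includeRight`.
theorem comul_comp_antipode :
    comul ∘ₗ antipode R =
      map (antipode R) (antipode R) ∘ₗ (TensorProduct.comm R A A).toLinearMap ∘ₗ comul := by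
  apply toConv_injective
  refine (left_inv_eq_right_inv (a := toConv comul) ?_
    (algHom_mul_algHom_comp_antipode (Bialgebra.comulAlgHom R A))).symm
  rw [← includeLeft_mul_includeRight, ← includeRight_comp_antipode_mul_includeLeft_comp_antipode,
    mul_assoc, ← mul_assoc _ (toConv includeLeft.toLinearMap), algHom_comp_antipode_mul_algHom,
    one_mul, algHom_comp_antipode_mul_algHom]

lemma leftHit_comp_antipode (φ : A →ₗ[R] R) :
    leftHit φ ∘ₗ antipode R = antipode R ∘ₗ rightHit (φ ∘ₗ antipode R) := by
  ext a
  have comul_antipode := congr($(comul_comp_antipode (R := R) (A := A)) a)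
  simp only [LinearMap.comp_apply] at comul_antipode
  simp [leftHit, rightHit, comul_antipode, ← (ℛ R a).eq]

section InverseAntipode

local notation "opₗ" => LinearEquiv.toLinearMap (MulOpposite.opLinearEquiv R (M := A))

variable {Sinv : A →ₗ[R] A}

variable (R) in
def antipodeInvAlgHomOp (h₁ : Sinv ∘ₗ antipode R = .id) (h₂ : antipode R ∘ₗ Sinv = .id) :
    A →ₐ[R] Aᵐᵒᵖ :=
  have inv_antipode (a : A) : Sinv (antipode R a) = a := congr($h₁ a)
  have antipode_inv (a : A) : antipode R (Sinv a) = a := congr($h₂ a)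
  .ofLinearMap (opₗ ∘ₗ Sinv) (by simpa using congr(op $(inv_antipode 1))) fun a b ↦ by
    rw [← antipode_inv a, ← antipode_inv b, ← antipode_mul_antidistrib]
    simp [inv_antipode]

lemma op_mul_op_comp_antipodeInv (h₁ : Sinv ∘ₗ antipode R = .id)
    (h₂ : antipode R ∘ₗ Sinv = .id) : toConv opₗ * toConv (opₗ ∘ₗ Sinv) = 1 := by
  have := algHom_comp_mul_algHom_comp_eq_one (antipodeInvAlgHomOp R h₁ h₂)
    LinearMap.antipode_mul_id
  simpa [antipodeInvAlgHomOp, LinearMap.comp_assoc, h₁] using this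

lemma op_comp_antipodeInv_mul_op (h₁ : Sinv ∘ₗ antipode R = .id)
    (h₂ : antipode R ∘ₗ Sinv = .id) : toConv (opₗ ∘ₗ Sinv) * toConv opₗ = 1 := by
  have := algHom_comp_mul_algHom_comp_eq_one (antipodeInvAlgHomOp R h₁ h₂)
    LinearMap.id_mul_antipode
  simpa [antipodeInvAlgHomOp, LinearMap.comp_assoc, h₁] using this

end InverseAntipode

end HopfAlgebra

section TwistedAntipode

open WithConv MulOpposite HopfAlgebra

local notation "opₗ" => LinearEquiv.toLinearMap (MulOpposite.opLinearEquiv k (M := H))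

variable {k H} {Sinv : H →ₗ[k] H}

lemma twistedAntipode_eq (δ : H →ₐ[k] k) :
    twistedAntipode k H δ = antipode k ∘ₗ rightHit δ.toLinearMap := by
  ext a
  simp [twistedAntipode, rightHit, ← (ℛ k a).eq]

lemma op_comp_aydRHSchar (δ : H →ₐ[k] k) (σ : H) :
    opₗ ∘ₗ aydRHSchar k H δ σ =
      (toConv opₗ * toConv (opₗ ∘ₗ mulRight k σ ∘ₗ twistedAntipode k H δ)).ofConv := by
  ext a
  simp [aydRHSchar, twistedAntipode, (ℛ k a).convMul_apply, ← (ℛ k a).eq]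

lemma op_comp_antipodeInv_mul_op_comp_toSpanSingleton (δ : H →ₐ[k] k) (σ : H) :
    (toConv (opₗ ∘ₗ Sinv) * toConv (opₗ ∘ₗ toSpanSingleton k H σ ∘ₗ δ.toLinearMap)).ofConv =
      opₗ ∘ₗ mulLeft k σ ∘ₗ Sinv ∘ₗ leftHit δ.toLinearMap := by
  ext a
  simp [leftHit, (ℛ k a).convMul_apply, ← (ℛ k a).eq]

lemma forall_smul_eq_aydRHSchar_iff (h₁ : Sinv ∘ₗ antipode k = .id)
    (h₂ : antipode k ∘ₗ Sinv = .id) (δ : H →ₐ[k] k) (σ : H) :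
    (∀ h : H, δ h • σ = aydRHSchar k H δ σ h) ↔
      ∀ h : H, twistedAntipode k H δ h * σ = σ * Sinv (leftHit δ.toLinearMap h) := by
  let u : (WithConv (H →ₗ[k] Hᵐᵒᵖ))ˣ :=
    ⟨toConv opₗ, toConv (opₗ ∘ₗ Sinv), op_mul_op_comp_antipodeInv h₁ h₂,
      op_comp_antipodeInv_mul_op h₁ h₂⟩
  calc (∀ h : H, δ h • σ = aydRHSchar k H δ σ h)
      ↔ ↑u * toConv (opₗ ∘ₗ mulRight k σ ∘ₗ twistedAntipode k H δ) =
          toConv (opₗ ∘ₗ toSpanSingleton k H σ ∘ₗ δ.toLinearMap) := by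
        rw [← toConv_ofConv (_ * _), ← op_comp_aydRHSchar, toConv_injective.eq_iff,
          LinearMap.ext_iff]
        simp only [LinearMap.coe_comp, LinearEquiv.coe_coe, coe_opLinearEquiv,
          Function.comp_apply, AlgHom.coe_toLinearMap, toSpanSingleton_apply, op_inj, eq_comm]
    _ ↔ toConv (opₗ ∘ₗ mulRight k σ ∘ₗ twistedAntipode k H δ) =
          ↑u⁻¹ * toConv (opₗ ∘ₗ toSpanSingleton k H σ ∘ₗ δ.toLinearMap) :=
        (Units.eq_inv_mul_iff_mul_eq u).symm
    _ ↔ _ := by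
        change _ = toConv (opₗ ∘ₗ Sinv) * _ ↔ _
        rw [← toConv_ofConv (_ * _), op_comp_antipodeInv_mul_op_comp_toSpanSingleton,
          toConv_injective.eq_iff, LinearMap.ext_iff]
        simp only [LinearMap.coe_comp, LinearEquiv.coe_coe, coe_opLinearEquiv,
          Function.comp_apply, mulRight_apply, mulLeft_apply, op_inj]

lemma antipodeInv_comp_leftHit_comp_twistedAntipode (h₁ : Sinv ∘ₗ antipode k = .id)
    (δ : H →ₐ[k] k) : Sinv ∘ₗ leftHit δ.toLinearMap ∘ₗ twistedAntipode k H δ = .id := by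
  rw [twistedAntipode_eq, ← LinearMap.comp_assoc (h := leftHit _), leftHit_comp_antipode,
    LinearMap.comp_assoc, ← LinearMap.comp_assoc (h := Sinv), h₁, LinearMap.id_comp]
  exact rightHit_comp_rightHit_of_mul_eq_one (algHom_mul_algHom_comp_antipode δ)

lemma twistedAntipode_surjective (h₂ : antipode k ∘ₗ Sinv = .id) (δ : H →ₐ[k] k) :
    Function.Surjective (twistedAntipode k H δ) := by
  have : twistedAntipode k H δ ∘ₗ rightHit (δ.toLinearMap ∘ₗ antipode k) ∘ₗ Sinv = .id := by
    rw [twistedAntipode_eq, LinearMap.comp_assoc, ← LinearMap.comp_assoc (f := Sinv),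
      rightHit_comp_rightHit_of_mul_eq_one (algHom_comp_antipode_mul_algHom δ),
      LinearMap.id_comp, h₂]
  exact Function.RightInverse.surjective (LinearMap.congr_fun this)

end TwistedAntipode

theorem statement2
    (Sinv : H →ₗ[k] H)
    (hSinv1 : Sinv ∘ₗ HopfAlgebra.antipode (R := k) = LinearMap.id)
    (hSinv2 : HopfAlgebra.antipode (R := k) ∘ₗ Sinv = LinearMap.id)
    (δ : H →ₐ[k] k) (σ : H)
    (hσ : comul (R := k) σ = σ ⊗ₜ[k] σ) (hσε : counit (R := k) σ = (1 : k)) :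
    -- `ᵟk_σ` is a right-left anti-Yetter-Drinfeld module, i.e.
    -- `Δ(x·h) = S(h⁽³⁾)σh⁽¹⁾ ⊗ x·h⁽²⁾`, identified with an equation in `H`, ...
    (∀ h : H, δ h • σ = aydRHSchar k H δ σ h) ↔
    -- ... iff `(δ,σ)` is a modular pair in involution: `S_δ² = Ad_σ`
    (∀ h : H,
      twistedAntipode k H δ (twistedAntipode k H δ h) =
        σ * h * HopfAlgebra.antipode (R := k) σ) := by
  let σ' : Hˣ := GroupLike.toUnits k ⟨σ, hσε, hσ⟩
  rw [forall_smul_eq_aydRHSchar_iff hSinv1 hSinv2, (twistedAntipode_surjective hSinv2 δ).forall]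
  refine forall_congr' fun h ↦ ?_
  rw [← LinearMap.comp_apply (f := leftHit _), ← LinearMap.comp_apply (f := Sinv),
    antipodeInv_comp_leftHit_comp_twistedAntipode hSinv1, LinearMap.id_apply]
  exact (Units.eq_mul_inv_iff_mul_eq (c := σ')).symm
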